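/- Fix a finite set $K_0 \subset [0,1]$, a set $K \subset [0,1]$ satisfying the DCC, and a set $J$ of positive reals satisfying the DCC. Suppose $(c_i)_{i \in \mathbb{N}}$ is a nondecreasing sequence of positive reals and $(\alpha_i)$ is a sequence in $J$ such that for each $i$ there exist positive integers $m_i, k_i$ and $f_i \in K_+$ with $(m_i - 1 + f_i + k_i c_i \alpha_i)/m_i \in K_0$. Then the sequence $(c_i)$ is eventually constant. -/

import Mathlib

def SatisfiesDCC (S : Set ℝ) : Prop :=
  ¬ ∃ f : ℕ → ℝ, (∀ n, f n ∈ S) ∧ ∀ n, f (n + 1) < f n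

def SatisfiesACC (S : Set ℝ) : Prop :=
  ¬ ∃ f : ℕ → ℝ, (∀ n, f n ∈ S) ∧ ∀ n, f n < f (n + 1)

def IPlus (I : Set ℝ) : Set ℝ :=
  {0} ∪ {j | j ∈ Set.Icc (0 : ℝ) 1 ∧
    ∃ l : List ℝ, l ≠ [] ∧ (∀ x ∈ l, x ∈ I) ∧ l.sum = j}

def DSet (I : Set ℝ) : Set ℝ :=
  {a | ∃ m : ℕ, 0 < m ∧ ∃ f ∈ IPlus I, a = (m - 1 + f) / m}


/-!
Put `t i = f i + k i * (c i * α i)`. Clearing the denominator gives `t i = 1 - m i * (1 - κ i)`,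
where `κ i ∈ K₀`, `κ i ≤ 1` and `t i ≥ 0`, which confines `t` to a finite set. `K₊` lies in the
additive monoid generated by the nonnegative DCC set `K`, so it is partially well ordered, and we
may pass to a subsequence along which `k`, `α` and `f` are nondecreasing. Then `t` is nondecreasing
with finite range, hence eventually constant; both of its summands are nondecreasing, so each is
eventually constant, and this pins down `c` along the subsequence, hence everywhere beyond it.
-/

theorem SatisfiesDCC.isWF {S : Set ℝ} (h : SatisfiesDCC S) : S.IsWF := by
  rw [Set.isWF_iff_no_descending_seq]
  exact fun f hf hmem => h ⟨f, hmem, fun n => hf n.lt_succ_self⟩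

theorem nonneg_of_mem_IPlus {I : Set ℝ} {x : ℝ} (hx : x ∈ IPlus I) : 0 ≤ x := by
  rcases hx with rfl | ⟨hx, -⟩
  exacts [le_rfl, hx.1]

theorem IPlus_subset_closure (I : Set ℝ) : IPlus I ⊆ AddSubmonoid.closure I := by
  rintro x (rfl | ⟨-, l, -, hl, rfl⟩)
  · exact zero_mem _
  · exact list_sum_mem fun y hy => AddSubmonoid.subset_closure (hl y hy)

theorem isPWO_IPlus {K : Set ℝ} (hK : ∀ x ∈ K, 0 ≤ x) (hdcc : SatisfiesDCC K) :
    (IPlus K).IsPWO :=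
  (hdcc.isWF.isPWO.addSubmonoid_closure hK).mono (IPlus_subset_closure K)

theorem finite_setOf_one_sub_natCast_mul {a : ℝ} (ha : 0 ≤ a) :
    {t : ℝ | 0 ≤ t ∧ ∃ m : ℕ, t = 1 - m * a}.Finite := by
  rcases ha.eq_or_lt with rfl | ha
  · refine (Set.finite_singleton 1).subset ?_
    rintro t ⟨-, m, rfl⟩
    simp
  · refine ((Set.finite_Iic ⌊1 / a⌋₊).image fun m : ℕ => 1 - m * a).subset ?_
    rintro t ⟨ht, m, rfl⟩
    exact ⟨m, Nat.le_floor ((le_div_iff₀ ha).mpr (by linarith)), rfl⟩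

theorem finite_setOf_one_sub_natCast_mul_one_sub {K₀ : Set ℝ} (hfin : K₀.Finite)
    (hK₀ : ∀ κ ∈ K₀, κ ≤ 1) :
    {t : ℝ | 0 ≤ t ∧ ∃ m : ℕ, ∃ κ ∈ K₀, t = 1 - m * (1 - κ)}.Finite := by
  refine (hfin.biUnion fun κ hκ =>
    finite_setOf_one_sub_natCast_mul (sub_nonneg.mpr (hK₀ κ hκ))).subset ?_
  rintro t ⟨ht, m, κ, hκ, rfl⟩
  exact Set.mem_biUnion hκ ⟨ht, m, rfl⟩

theorem eq_one_sub_natCast_mul_one_sub_div {m : ℕ} (hm : 0 < m) (x : ℝ) :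
    x = 1 - m * (1 - (m - 1 + x) / m) := by
  field_simp
  ring

theorem Monotone.exists_forall_ge_eq_of_finite_range {α : Type*} [PartialOrder α] {u : ℕ → α}
    (hu : Monotone u) (hfin : (Set.range u).Finite) : ∃ N, ∀ n, N ≤ n → u n = u N := by
  obtain ⟨_, ⟨N, rfl⟩, hmax⟩ := hfin.exists_maximal (Set.range_nonempty u)
  exact ⟨N, fun n hn => le_antisymm (hmax ⟨n, rfl⟩ (hu hn)) (hu hn)⟩

theorem Monotone.forall_ge_eq_of_subseq {α : Type*} [PartialOrder α] {c : ℕ → α}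
    (hc : Monotone c) {φ : ℕ → ℕ} (hφ : StrictMono φ) {N : ℕ}
    (h : ∀ j, N ≤ j → c (φ j) = c (φ N)) : ∀ n, φ N ≤ n → c n = c (φ N) := fun n hn =>
  le_antisymm (h (max N n) (le_max_left N n) ▸ hc ((le_max_right N n).trans (hφ.id_le _)))
    (hc hn)

theorem eq_of_add_mul_mul_eq {f f' k k' c c' a a' : ℝ} (hf : f ≤ f') (hk : k ≤ k')
    (hc : c ≤ c') (ha : a ≤ a') (hk₀ : 0 < k) (hc₀ : 0 ≤ c) (ha₀ : 0 < a)
    (h : f' + k' * (c' * a') = f + k * (c * a)) : c' = c := by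
  have : k * a * c' ≤ k * a * c :=
    calc k * a * c' ≤ k' * a' * c' :=
          mul_le_mul_of_nonneg_right (mul_le_mul hk ha ha₀.le (hk₀.le.trans hk)) (hc₀.trans hc)
      _ = k' * (c' * a') := by ring
      _ ≤ k * (c * a) := by linarith
      _ = k * a * c := by ring
  exact le_antisymm (le_of_mul_le_mul_left this (mul_pos hk₀ ha₀)) hc

theorem eventually_constant_of_lct_data (K₀ K J : Set ℝ)
    (hfin : K₀.Finite) (hK₀ : K₀ ⊆ Set.Icc 0 1)
    (hK : K ⊆ Set.Icc 0 1) (hKdcc : SatisfiesDCC K)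
    (hJ : J ⊆ Set.Ioi 0) (hJdcc : SatisfiesDCC J)
    (c : ℕ → ℝ) (hc : Monotone c) (hcpos : ∀ i, 0 < c i)
    (α : ℕ → ℝ) (hα : ∀ i, α i ∈ J)
    (h : ∀ i, ∃ m k : ℕ, 0 < m ∧ 0 < k ∧
      ∃ f ∈ IPlus K, (m - 1 + f + k * (c i * α i)) / m ∈ K₀) :
    ∃ N, ∀ n, N ≤ n → c n = c N := by
  choose m k hm hk f hf hκ using h
  have hα₀ i : 0 < α i := hJ (hα i)
  set t : ℕ → ℝ := fun i => f i + k i * (c i * α i)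
  have ht_nonneg i : 0 ≤ t i :=
    add_nonneg (nonneg_of_mem_IPlus (hf i))
      (mul_pos (Nat.cast_pos.2 (hk i)) (mul_pos (hcpos i) (hα₀ i))).le
  have ht_eq i : t i = 1 - m i * (1 - (m i - 1 + f i + k i * (c i * α i)) / m i) := by
    rw [add_assoc]
    exact eq_one_sub_natCast_mul_one_sub_div (hm i) (t i)
  obtain ⟨φ, hφ⟩ := ((Set.isPWO_of_wellQuasiOrderedLE Set.univ).prod
      (hJdcc.isWF.isPWO.prod (isPWO_IPlus (fun x hx => (hK hx).1) hKdcc))).exists_monotone_subseq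
      (f := fun i => (k i, α i, f i)) fun i => ⟨trivial, hα i, hf i⟩
  have ht_mono : Monotone (t ∘ φ) := fun a b hab => by
    obtain ⟨hk', hα', hf'⟩ := hφ hab
    exact add_le_add hf' (mul_le_mul (Nat.cast_le.2 hk')
      (mul_le_mul (hc (φ.monotone hab)) hα' (hα₀ _).le (hcpos _).le)
      (mul_pos (hcpos _) (hα₀ _)).le (Nat.cast_nonneg _))
  obtain ⟨N, hN⟩ := ht_mono.exists_forall_ge_eq_of_finite_range
    ((finite_setOf_one_sub_natCast_mul_one_sub hfin fun κ hκ => (hK₀ hκ).2).subset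
      (Set.range_subset_iff.2 fun j => ⟨ht_nonneg (φ j), m (φ j), _, hκ (φ j), ht_eq (φ j)⟩))
  refine ⟨φ N, hc.forall_ge_eq_of_subseq φ.strictMono fun j hj => ?_⟩
  obtain ⟨hk', hα', hf'⟩ := hφ hj
  exact eq_of_add_mul_mul_eq hf' (Nat.cast_le.2 hk') (hc (φ.monotone hj)) hα'
    (Nat.cast_pos.2 (hk _)) (hcpos _).le (hα₀ _) (hN j hj)
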